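/- Let $P$ be a quadratic polynomial on $\mathbb{R}^n$ and let $v : h\mathbb{Z}^n \cap U \to \mathbb{R}$ be a mesh function. Fix $x \in U$, $\theta > 0$, and let $x^*$ be a point attaining the supremum in the mesh sup-convolution $v^{\theta,+}(x) = \sup_{z}\{v(z) - |x-z|^2/(2\theta)\}$. Suppose $P(x) = v^{\theta,+}(x)$ and $P(y) \ge v^{\theta,+}(y)$ for all $y \in B_{hN}(x)$. Then for every $y \in h\mathbb{Z}^n$ with $0 < |y| \le Nh$, the second difference satisfies $\delta_y^2 P(x^*) \ge \delta_y^2 v(x^*)$, where $\delta_y^2 w(z) = (w(z-y) - 2w(z) + w(z+y))/|y|^2$. -/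

import Mathlib

/-!
A point `u` of the ball sees the competitor `z` in the sup-convolution, so
`v z - ‖u - z‖² / (2θ) ≤ v^{θ,+}(u) ≤ P u`; by continuity this persists on the closed ball.
Taking `z = x* ± y`, `u = x ± y` keeps `u - z = x - x*` fixed, so the penalty terms cancel in the
second difference at `x`, where `P` touches `v^{θ,+}`. Since `δ²_y P` is independent of the base
point for quadratic `P`, the inequality moves from `x` to `x*`.
-/

open Metric

section Quadratic

variable {E : Type*} [NormedAddCommGroup E] [InnerProductSpace ℝ E]
  {P : E → ℝ} {c : ℝ} {p : E} {B : E →L[ℝ] E}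

theorem continuous_of_eq_quadratic (hP : ∀ z, P z = c + inner ℝ p z + inner ℝ (B z) z) :
    Continuous P := by
  rw [funext hP]
  fun_prop

theorem secondDiff_of_eq_quadratic (hP : ∀ z, P z = c + inner ℝ p z + inner ℝ (B z) z)
    (z y : E) : P (z - y) - 2 * P z + P (z + y) = 2 * inner ℝ (B y) y := by
  simp only [hP, map_add, map_sub, inner_add_left, inner_add_right, inner_sub_left,
    inner_sub_right]
  ring

end Quadratic

theorem le_on_closedBall_of_le_on_ball {E : Type*} [NormedAddCommGroup E] [NormedSpace ℝ E]
    {f g : E → ℝ} (hf : Continuous f) (hg : Continuous g) {x : E} {r : ℝ} (hr : r ≠ 0)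
    (hle : ∀ u ∈ ball x r, g u ≤ f u) : ∀ u ∈ closedBall x r, g u ≤ f u := by
  rw [← closure_ball x hr]
  exact closure_minimal hle (isClosed_le hg hf)

theorem penalty_le_of_le_on_ball {E : Type*} [NormedAddCommGroup E] [NormedSpace ℝ E]
    {S : Set E} {v vplus P : E → ℝ} {θ r : ℝ} {x : E}
    (hvplus : ∀ w, vplus w = sSup {t : ℝ | ∃ z ∈ S, t = v z - ‖w - z‖ ^ 2 / (2 * θ)})
    (hbdd : ∀ w, BddAbove {t : ℝ | ∃ z ∈ S, t = v z - ‖w - z‖ ^ 2 / (2 * θ)})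
    (hP : Continuous P) (hr : r ≠ 0) (hPge : ∀ w ∈ ball x r, vplus w ≤ P w) :
    ∀ z ∈ S, ∀ u ∈ closedBall x r, v z - ‖u - z‖ ^ 2 / (2 * θ) ≤ P u := by
  intro z hz
  refine le_on_closedBall_of_le_on_ball hP (by fun_prop) hr fun u hu => ?_
  calc v z - ‖u - z‖ ^ 2 / (2 * θ) ≤ vplus u := by
        rw [hvplus]
        exact le_csSup (hbdd u) ⟨z, hz, rfl⟩
    _ ≤ P u := hPge u hu

theorem stmt18_general (n N : ℕ) (h : ℝ)
    (S : Set (EuclideanSpace ℝ (Fin n)))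
    (v : EuclideanSpace ℝ (Fin n) → ℝ)
    (θ : ℝ)
    (vplus : EuclideanSpace ℝ (Fin n) → ℝ)
    (hvplus : ∀ w, vplus w = sSup {z : ℝ | ∃ y ∈ S, z = v y - ‖w - y‖ ^ 2 / (2 * θ)})
    (hbdd : ∀ w : EuclideanSpace ℝ (Fin n),
      BddAbove {z : ℝ | ∃ y ∈ S, z = v y - ‖w - y‖ ^ 2 / (2 * θ)})
    (x : EuclideanSpace ℝ (Fin n))
    (xs : EuclideanSpace ℝ (Fin n))
    (hattain : vplus x = v xs - ‖x - xs‖ ^ 2 / (2 * θ))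
    (P : EuclideanSpace ℝ (Fin n) → ℝ)
    (hquad : ∃ (c : ℝ) (p : EuclideanSpace ℝ (Fin n))
        (B : EuclideanSpace ℝ (Fin n) →L[ℝ] EuclideanSpace ℝ (Fin n)),
      ∀ z, P z = c + (inner ℝ p z : ℝ) + (inner ℝ (B z) z : ℝ))
    (hPx : P x = vplus x)
    (hPge : ∀ w ∈ ball x (h * N), vplus w ≤ P w)
    (y : EuclideanSpace ℝ (Fin n))
    (hy0 : 0 < ‖y‖) (hyN : ‖y‖ ≤ N * h)
    (hxsy : xs + y ∈ S) (hxsy' : xs - y ∈ S) :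
    (v (xs - y) - 2 * v xs + v (xs + y)) / ‖y‖ ^ 2
      ≤ (P (xs - y) - 2 * P xs + P (xs + y)) / ‖y‖ ^ 2 := by
  obtain ⟨c, p, B, hP⟩ := hquad
  have hr : h * N ≠ 0 := by nlinarith
  have hpenalty := penalty_le_of_le_on_ball hvplus hbdd (continuous_of_eq_quadratic hP) hr hPge
  have hplus : v (xs + y) - ‖x - xs‖ ^ 2 / (2 * θ) ≤ P (x + y) := by
    have := hpenalty _ hxsy (x + y) (by simpa [mul_comm] using hyN)
    rwa [add_sub_add_right_eq_sub] at this
  have hminus : v (xs - y) - ‖x - xs‖ ^ 2 / (2 * θ) ≤ P (x - y) := by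
    have := hpenalty _ hxsy' (x - y) (by simpa [mul_comm] using hyN)
    rwa [sub_sub_sub_cancel_right] at this
  gcongr ?_ / _
  rw [secondDiff_of_eq_quadratic hP, ← secondDiff_of_eq_quadratic hP x]
  linarith

/-- If a quadratic polynomial `P` touches the mesh sup-convolution `v^{θ,+}` from above at
`x` on the ball `B_{hN}(x)`, and `x*` attains the supremum defining `v^{θ,+}(x)`, then for
every mesh vector `y` with `0 < |y| ≤ Nh`, the second differences satisfy
`δ²_y P(x*) ≥ δ²_y v(x*)`. -/
theorem stmt18 (n N : ℕ) (h : ℝ) (hh : 0 < h)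
    (U S : Set (EuclideanSpace ℝ (Fin n)))
    (hS : S = {z ∈ U | ∃ m : Fin n → ℤ, ∀ i, z i = h * (m i : ℝ)})
    (v : EuclideanSpace ℝ (Fin n) → ℝ)
    (θ : ℝ) (hθ : 0 < θ)
    (vplus : EuclideanSpace ℝ (Fin n) → ℝ)
    (hvplus : ∀ w, vplus w = sSup {z : ℝ | ∃ y ∈ S, z = v y - ‖w - y‖ ^ 2 / (2 * θ)})
    (hbdd : ∀ w : EuclideanSpace ℝ (Fin n),
      BddAbove {z : ℝ | ∃ y ∈ S, z = v y - ‖w - y‖ ^ 2 / (2 * θ)})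
    (x : EuclideanSpace ℝ (Fin n)) (hx : x ∈ U)
    (xs : EuclideanSpace ℝ (Fin n)) (hxs : xs ∈ S)
    (hattain : vplus x = v xs - ‖x - xs‖ ^ 2 / (2 * θ))
    (P : EuclideanSpace ℝ (Fin n) → ℝ)
    (hquad : ∃ (c : ℝ) (p : EuclideanSpace ℝ (Fin n))
        (B : EuclideanSpace ℝ (Fin n) →L[ℝ] EuclideanSpace ℝ (Fin n)),
      ∀ z, P z = c + (inner ℝ p z : ℝ) + (inner ℝ (B z) z : ℝ))
    (hPx : P x = vplus x)
    (hPge : ∀ w ∈ ball x (h * N), vplus w ≤ P w)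
    (y : EuclideanSpace ℝ (Fin n)) (hy : ∃ m : Fin n → ℤ, ∀ i, y i = h * (m i : ℝ))
    (hy0 : 0 < ‖y‖) (hyN : ‖y‖ ≤ N * h)
    (hxsy : xs + y ∈ S) (hxsy' : xs - y ∈ S) :
    (v (xs - y) - 2 * v xs + v (xs + y)) / ‖y‖ ^ 2
      ≤ (P (xs - y) - 2 * P xs + P (xs + y)) / ‖y‖ ^ 2 :=
  stmt18_general n N h S v θ vplus hvplus hbdd x xs hattain P hquad hPx hPge y hy0 hyN hxsy hxsy'
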